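/- For every natural number n ≥ 1, the total chromatic mutual-visibility number of the n-dimensional hypercube satisfies n ≤ χ_μ^total(Q_n) ≤ 2n. -/

import Mathlib

/-- The `n`-dimensional hypercube: vertices are subsets of `{1,…,n}` (modeled as
`Finset (Fin n)`), with `A` and `B` adjacent iff their symmetric difference has size 1. -/
def hypercube (n : ℕ) : SimpleGraph (Finset (Fin n)) where
  Adj A B := (symmDiff A B).card = 1
  symm := ⟨fun A B h => by simpa only [symmDiff_comm] using h⟩
  loopless := ⟨fun A h => by simp [symmDiff_self] at h⟩

/-- `u` and `v` are `M`-visible in `G`: there is a shortest `u,v`-path containing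
no vertex of `M` as an internal vertex. -/
def IsVisiblePair {V : Type*} (G : SimpleGraph V) (M : Set V) (u v : V) : Prop :=
  ∃ p : G.Walk u v, p.IsPath ∧ p.length = G.dist u v ∧
    ∀ x ∈ p.support, x ∈ M → x = u ∨ x = v

/-- `M` is a mutual-visibility set in `G`. -/
def IsMutualVisibilitySet {V : Type*} (G : SimpleGraph V) (M : Set V) : Prop :=
  ∀ u ∈ M, ∀ v ∈ M, IsVisiblePair G M u v

/-- `M` is a total mutual-visibility set in `G`. -/
def IsTotalMutualVisibilitySet {V : Type*} (G : SimpleGraph V) (M : Set V) : Prop :=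
  ∀ u v : V, IsVisiblePair G M u v

/-- The mutual-visibility number `μ(Q_n)`. -/
noncomputable def mu (n : ℕ) : ℕ :=
  sSup {k | ∃ M : Set (Finset (Fin n)), IsMutualVisibilitySet (hypercube n) M ∧ M.ncard = k}

/-- The total mutual-visibility number `μ_t(Q_n)`. -/
noncomputable def muTotal (n : ℕ) : ℕ :=
  sSup {k | ∃ M : Set (Finset (Fin n)), IsTotalMutualVisibilitySet (hypercube n) M ∧ M.ncard = k}

/-- The chromatic mutual-visibility number `χ_μ(Q_n)`: the least number of colors in a
vertex-coloring of `Q_n` in which every color class is a mutual-visibility set. -/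
noncomputable def chiMu (n : ℕ) : ℕ :=
  sInf {k | ∃ c : Finset (Fin n) → Fin k, ∀ i : Fin k,
    IsMutualVisibilitySet (hypercube n) {A | c A = i}}

/-- The total chromatic mutual-visibility number `χ_μ^total(Q_n)`. -/
noncomputable def chiMuTotal (n : ℕ) : ℕ :=
  sInf {k | ∃ c : Finset (Fin n) → Fin k, ∀ i : Fin k,
    IsTotalMutualVisibilitySet (hypercube n) {A | c A = i}}

/-- A family `F` of `r`-element subsets of `[n]` contains an `(r,s,t)`-daisy if there are
`A ⊆ B` with `|A| = r - t` and `|B| = r + s - t` such that every `r`-set `T` with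
`A ⊆ T ⊆ B` belongs to `F`. -/
def ContainsDaisy (n r s t : ℕ) (F : Finset (Finset (Fin n))) : Prop :=
  ∃ A B : Finset (Fin n), A ⊆ B ∧ A.card = r - t ∧ B.card = r + s - t ∧
    ∀ T : Finset (Fin n), A ⊆ T → T ⊆ B → T.card = r → T ∈ F

/-- The Turán number `ex(n, D_r(s,t))`: the largest size of a family of `r`-element
subsets of `[n]` containing no `(r,s,t)`-daisy. -/
noncomputable def daisyTuran (n r s t : ℕ) : ℕ :=
  sSup {k | ∃ F : Finset (Finset (Fin n)), (∀ T ∈ F, T.card = r) ∧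
    ¬ ContainsDaisy n r s t F ∧ F.card = k}

/-!
In `Q_n` the distance between `A` and `B` is `|A ∆ B|`, and a set `M` is a total
mutual-visibility set iff no two of its vertices are at distance 2. Indeed, if `X, Y ∈ M` with
`X ∆ Y = {a, b}`, every geodesic from `X ∆ {a}` to `X ∆ {b}` passes through `X` or `Y`;
conversely, walking from `u` to `v` one coordinate at a time, of two candidate next vertices
at most one lies in `M`, since they are at distance 2.

The `n` singletons are pairwise at distance 2, so they need distinct colours. Colouring `A` by
`∑ i ∈ A, (i + 1)` modulo `2n` works, because the weights of two sets at distance 2 differ by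
`±(a + 1) ± (b + 1)`, which is nonzero and smaller than `2n` in absolute value.
-/

open Finset
open scoped symmDiff

namespace Finset

variable {α : Type*} [DecidableEq α]

lemma singleton_symmDiff_singleton {a b : α} (hab : a ≠ b) :
    ({a} : Finset α) ∆ {b} = {a, b} := by
  rw [(disjoint_singleton.mpr hab).symmDiff_eq_sup, sup_eq_union, insert_eq]

lemma card_symmDiff_le_add (s t u : Finset α) :
    #(s ∆ u) ≤ #(s ∆ t) + #(t ∆ u) :=
  (card_le_card (symmDiff_triangle s t u)).trans (card_union_le _ _)

lemma sdiff_eq_filter_mem_symmDiff (s t : Finset α) : s \ t = (s ∆ t).filter (· ∈ s) := by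
  ext x
  simp only [mem_sdiff, mem_filter, mem_symmDiff]
  tauto

lemma not_sum_modEq_of_symmDiff_eq_pair {X Y : Finset α} {a b : α} {w : α → ℤ} {N : ℤ}
    (hab : a ≠ b) (hXY : X ∆ Y = {a, b}) (ha : 0 < w a) (hb : 0 < w b) (hne : w a ≠ w b)
    (hN : w a + w b < N) : ¬ ∑ x ∈ X, w x ≡ ∑ x ∈ Y, w x [ZMOD N] := by
  intro h
  have hd := Int.modEq_iff_dvd.mp h
  rw [← sum_sdiff_sub_sum_sdiff, sdiff_eq_filter_mem_symmDiff, symmDiff_comm, hXY,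
    sdiff_eq_filter_mem_symmDiff, hXY, sum_filter, sum_filter, sum_pair hab, sum_pair hab] at hd
  have hY : ∀ x ∈ X ∆ Y, x ∈ Y ↔ x ∉ X := fun x hx => by rw [mem_symmDiff] at hx; tauto
  simp only [hY a (by simp [hXY]), hY b (by simp [hXY])] at hd
  by_cases haX : a ∈ X <;> by_cases hbX : b ∈ X <;> simp only [haX, hbX, if_true, if_false,
    not_true_eq_false, not_false_eq_true] at hd <;>
  · have := Int.eq_zero_of_abs_lt_dvd hd (abs_lt.mpr ⟨by omega, by omega⟩)
    omega

end Finset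

lemma IsVisiblePair.exists_adj_adj_notMem {V : Type*} {G : SimpleGraph V} {M : Set V} {u v : V}
    (h : IsVisiblePair G M u v) (h2 : G.dist u v = 2) :
    ∃ w, G.Adj u w ∧ G.Adj w v ∧ w ∉ M := by
  obtain ⟨p, -, hlen, hM⟩ := h
  have huw := p.adj_getVert_succ (i := 0) (by omega)
  have hwv := p.adj_getVert_succ (i := 1) (by omega)
  rw [p.getVert_zero] at huw
  rw [p.getVert_of_length_le (by omega : p.length ≤ 1 + 1)] at hwv
  refine ⟨p.getVert 1, huw, hwv, fun hw => ?_⟩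
  rcases hM _ (p.getVert_mem_support 1) hw with h | h
  · exact huw.ne h.symm
  · exact hwv.ne h

section Hypercube

variable {n : ℕ}

lemma hypercube_adj_iff {A B : Finset (Fin n)} : (hypercube n).Adj A B ↔ #(A ∆ B) = 1 := Iff.rfl

lemma hypercube_adj_symmDiff_singleton (A : Finset (Fin n)) (a : Fin n) :
    (hypercube n).Adj A (A ∆ {a}) := by
  rw [hypercube_adj_iff, symmDiff_symmDiff_cancel_left, card_singleton]

lemma card_symmDiff_le_length {u v : Finset (Fin n)} (p : (hypercube n).Walk u v) :
    #(u ∆ v) ≤ p.length := by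
  induction p with
  | nil => simp
  | @cons u w v huw p ih =>
    rw [SimpleGraph.Walk.length_cons]
    have := card_symmDiff_le_add u w v
    rw [hypercube_adj_iff.mp huw] at this
    omega

lemma exists_mem_symmDiff_eq_or_notMem {M : Set (Finset (Fin n))}
    (hM : ∀ X ∈ M, ∀ Y ∈ M, #(X ∆ Y) ≠ 2) {u v : Finset (Fin n)} (huv : u ≠ v) :
    ∃ a ∈ u ∆ v, u ∆ {a} = v ∨ u ∆ {a} ∉ M := by
  have hpos : 0 < #(u ∆ v) := card_pos.mpr (symmDiff_nonempty.mpr huv)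
  obtain h1 | h2 := (show 1 ≤ #(u ∆ v) from hpos).eq_or_lt
  · obtain ⟨a, ha⟩ := card_eq_one.mp h1.symm
    exact ⟨a, by simp [ha], Or.inl (by rw [← ha, symmDiff_symmDiff_cancel_left])⟩
  · obtain ⟨a, ha, b, hb, hab⟩ := one_lt_card.mp h2
    by_cases haM : u ∆ {a} ∈ M
    · refine ⟨b, hb, Or.inr fun hbM => hM _ haM _ hbM ?_⟩
      rw [symmDiff_symmDiff_symmDiff_comm, symmDiff_self, bot_symmDiff,
        singleton_symmDiff_singleton hab, card_pair hab]
    · exact ⟨a, ha, Or.inr haM⟩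

lemma exists_walk_length_eq_card_symmDiff {M : Set (Finset (Fin n))}
    (hM : ∀ X ∈ M, ∀ Y ∈ M, #(X ∆ Y) ≠ 2) (u v : Finset (Fin n)) :
    ∃ p : (hypercube n).Walk u v, p.length = #(u ∆ v) ∧
      ∀ x ∈ p.support, x ∈ M → x = u ∨ x = v := by
  induction h : #(u ∆ v) generalizing u with
  | zero =>
    obtain rfl : u = v := symmDiff_eq_bot.mp (card_eq_zero.mp h)
    exact ⟨.nil, rfl, by simp⟩
  | succ d ih =>
    obtain ⟨a, ha, hav⟩ := exists_mem_symmDiff_eq_or_notMem hM (u := u) (v := v)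
      (by rintro rfl; simp at h)
    have hd : #((u ∆ {a}) ∆ v) = d := by
      rw [symmDiff_right_comm, symmDiff_of_ge (singleton_subset_iff.mpr ha), ← erase_eq,
        card_erase_of_mem ha, h, Nat.add_sub_cancel]
    obtain ⟨p, hlen, hpM⟩ := ih (u ∆ {a}) hd
    refine ⟨.cons (hypercube_adj_symmDiff_singleton u a) p, by simp [hlen], ?_⟩
    rintro x hx hxM
    rw [SimpleGraph.Walk.support_cons, List.mem_cons] at hx
    rcases hx with rfl | hx
    · exact Or.inl rfl
    · rcases hpM x hx hxM with rfl | rfl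
      · exact Or.inr (hav.resolve_right (not_not.mpr hxM))
      · exact Or.inr rfl

lemma hypercube_dist (u v : Finset (Fin n)) : (hypercube n).dist u v = #(u ∆ v) := by
  obtain ⟨p, hp, -⟩ := exists_walk_length_eq_card_symmDiff (M := ∅) (by simp) u v
  obtain ⟨q, hq⟩ := p.reachable.exists_walk_length_eq_dist
  exact le_antisymm (hp ▸ SimpleGraph.dist_le p) (hq ▸ card_symmDiff_le_length q)

lemma symmDiff_subset_of_hypercube_adj_adj {u w v : Finset (Fin n)} (huv : u ≠ v)
    (huw : (hypercube n).Adj u w) (hwv : (hypercube n).Adj w v) : u ∆ w ⊆ u ∆ v := by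
  obtain ⟨c, hc⟩ := card_eq_one.mp (hypercube_adj_iff.mp huw)
  obtain ⟨d, hd⟩ := card_eq_one.mp (hypercube_adj_iff.mp hwv)
  have huv' : u ∆ v = {c} ∆ {d} := by rw [← hc, ← hd, symmDiff_assoc, symmDiff_symmDiff_cancel_left]
  obtain rfl | hcd := eq_or_ne c d
  · exact absurd (symmDiff_eq_bot.mp (by rw [huv', symmDiff_self])) huv
  · rw [hc, huv', singleton_symmDiff_singleton hcd]
    exact singleton_subset_iff.mpr (mem_insert_self c {d})

theorem isTotalMutualVisibilitySet_hypercube_iff {M : Set (Finset (Fin n))} :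
    IsTotalMutualVisibilitySet (hypercube n) M ↔ ∀ X ∈ M, ∀ Y ∈ M, #(X ∆ Y) ≠ 2 := by
  refine ⟨fun hM X hX Y hY hXY => ?_, fun hM u v => ?_⟩
  · obtain ⟨a, b, hab, hXY⟩ := card_eq_two.mp hXY
    have huv : (X ∆ {a}) ∆ (X ∆ {b}) = {a, b} := by
      rw [symmDiff_symmDiff_symmDiff_comm, symmDiff_self, bot_symmDiff,
        singleton_symmDiff_singleton hab]
    obtain ⟨w, huw, hwv, hwM⟩ := (hM (X ∆ {a}) (X ∆ {b})).exists_adj_adj_notMem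
      (by rw [hypercube_dist, huv, card_pair hab])
    have hsub := symmDiff_subset_of_hypercube_adj_adj
      (fun h => hab (singleton_injective (symmDiff_right_injective X h))) huw hwv
    obtain ⟨c, hc⟩ := card_eq_one.mp (hypercube_adj_iff.mp huw)
    have hw : w = X ∆ {a} ∆ {c} := by rw [← hc, symmDiff_symmDiff_cancel_left]
    rw [hc, huv, singleton_subset_iff, mem_insert, mem_singleton] at hsub
    rcases hsub with rfl | rfl
    · exact hwM (by rwa [hw, symmDiff_symmDiff_cancel_right])
    · exact hwM (by rwa [hw, symmDiff_assoc, singleton_symmDiff_singleton hab, ← hXY,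
        symmDiff_symmDiff_cancel_left])
  · obtain ⟨p, hp, hpM⟩ := exists_walk_length_eq_card_symmDiff hM u v
    have hp : p.length = (hypercube n).dist u v := by rw [hp, hypercube_dist]
    exact ⟨p, p.isPath_of_length_eq_dist hp, hp, hpM⟩

lemma le_of_hypercube_totalMutualVisibility_coloring {k : ℕ}
    (c : Finset (Fin n) → Fin k) (hc : ∀ i, IsTotalMutualVisibilitySet (hypercube n) {A | c A = i}) :
    n ≤ k := by
  by_contra! hkn
  obtain ⟨i, j, hij, hcij⟩ := Fintype.exists_ne_map_eq_of_card_lt (fun i : Fin n => c {i})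
    (by simpa using hkn)
  refine isTotalMutualVisibilitySet_hypercube_iff.mp (hc (c {i})) {i} rfl {j} hcij.symm ?_
  rw [singleton_symmDiff_singleton hij, card_pair hij]

lemma exists_hypercube_totalMutualVisibility_coloring_two_mul (hn : 0 < n) :
    ∃ c : Finset (Fin n) → Fin (2 * n),
      ∀ i, IsTotalMutualVisibilitySet (hypercube n) {A | c A = i} := by
  refine ⟨fun A => ⟨(∑ i ∈ A, (i + 1 : ℕ)) % (2 * n), Nat.mod_lt _ (by omega)⟩,
    fun i => isTotalMutualVisibilitySet_hypercube_iff.mpr ?_⟩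
  rintro X rfl Y hY hXY
  obtain ⟨a, b, hab, hXY⟩ := card_eq_two.mp hXY
  have hmod : ∑ i ∈ X, (i + 1 : ℕ) ≡ ∑ i ∈ Y, (i + 1 : ℕ) [MOD 2 * n] := (Fin.ext_iff.mp hY).symm
  rw [← Int.natCast_modEq_iff] at hmod
  push_cast at hmod
  refine not_sum_modEq_of_symmDiff_eq_pair hab hXY (by omega) (by omega)
    (fun h => hab (Fin.ext (by omega))) ?_ hmod
  have := a.isLt
  have := b.isLt
  have : (a : ℕ) ≠ b := Fin.val_ne_of_ne hab
  omega

end Hypercube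

/-- For every `n ≥ 1`, `n ≤ χ_μ^total(Q_n) ≤ 2n`. -/
theorem chiMuTotal_hypercube_bounds (n : ℕ) (hn : 1 ≤ n) :
    n ≤ chiMuTotal n ∧ chiMuTotal n ≤ 2 * n := by
  obtain ⟨c, hc⟩ := exists_hypercube_totalMutualVisibility_coloring_two_mul hn
  have hmem : 2 * n ∈ {k | ∃ c : Finset (Fin n) → Fin k, ∀ i : Fin k,
      IsTotalMutualVisibilitySet (hypercube n) {A | c A = i}} := ⟨c, hc⟩
  refine ⟨le_csInf ⟨_, hmem⟩ ?_, Nat.sInf_le hmem⟩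
  rintro k ⟨c, hc⟩
  exact le_of_hypercube_totalMutualVisibility_coloring c hc
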